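/- Any concatenation of finitely many MSCs, each of which admits a B_i-bounded linearisation that is complete (all sends matched within the MSC), admits a linearisation that is max_i(B_i)-bounded; hence every HMSC-definable language is existentially B-bounded for B the maximum bound over its finitely many vertex BMSCs. -/

import Mathlib

/-- Events: `snd P Q m` is process `P` sending message `m` to `Q`;
    `rcv P Q m` is process `Q` receiving message `m` from `P`. -/
inductive Ev where
  | snd : ℕ → ℕ → ℕ → Ev
  | rcv : ℕ → ℕ → ℕ → Ev
deriving DecidableEq

/-- Message values of send events on channel (P,Q) in w. -/
def sends (w : List Ev) (P Q : ℕ) : List ℕ :=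
  w.filterMap fun e => match e with
    | .snd p q m => if p = P ∧ q = Q then some m else none
    | _ => none

/-- Message values of receive events on channel (P,Q) in w. -/
def recvs (w : List Ev) (P Q : ℕ) : List ℕ :=
  w.filterMap fun e => match e with
    | .rcv p q m => if p = P ∧ q = Q then some m else none
    | _ => none

def channelCompliant (w : List Ev) : Prop :=
  ∀ u, u <+: w → ∀ P Q, recvs u P Q <+: sends u P Q

def complete (w : List Ev) : Prop :=
  ∀ P Q, sends w P Q = recvs w P Q

def bounded (B : ℕ) (w : List Ev) : Prop :=
  ∀ u, u <+: w → ∀ P Q, (sends u P Q).length ≤ (recvs u P Q).length + B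

def halfDuplex (w : List Ev) : Prop :=
  ∀ u, u <+: w → ∀ P Q,
    sends u P Q = recvs u P Q ∨ sends u Q P = recvs u Q P

/-- Send at position i on channel (P,Q) is matched by receive at position j. -/
def Matches (w : List Ev) (P Q i j : ℕ) : Prop :=
  i < j ∧ j < w.length ∧
  (∃ m, w[i]? = some (.snd P Q m) ∧ w[j]? = some (.rcv P Q m)) ∧
  sends (w.take (i+1)) P Q = recvs (w.take (j+1)) P Q

def IsSendAt (w : List Ev) (P Q i : ℕ) : Prop := ∃ m, w[i]? = some (Ev.snd P Q m)
def IsRcvAt (w : List Ev) (P Q i : ℕ) : Prop := ∃ m, w[i]? = some (Ev.rcv P Q m)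
def MatchedAt (w : List Ev) (P Q i : ℕ) : Prop := ∃ j, Matches w P Q i j

/-- The process performing the event. -/
def actor : Ev → ℕ
  | .snd p _ _ => p
  | .rcv _ q _ => q

/-- Projection of a word onto the events of process X. -/
def proj (w : List Ev) (X : ℕ) : List Ev := w.filter (fun e => actor e == X)

/-- Two words induce the same MSC (same per-process orders; with FIFO matching,
    this determines the matching). -/
def sameMSC (w v : List Ev) : Prop := ∀ X, proj w X = proj v X

/-- Existentially B-bounded: some linearisation of msc(w) is B-bounded. -/
def existBounded (B : ℕ) (w : List Ev) : Prop :=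
  ∃ v, channelCompliant v ∧ sameMSC w v ∧ bounded B v

def isSnd : Ev → Prop
  | .snd _ _ _ => True
  | _ => False

def isRcv : Ev → Prop
  | .rcv _ _ _ => True
  | _ => False

/-- Positions i and j lie in the same block of the block decomposition. -/
def SameBlock (blocks : List (List Ev)) (i j : ℕ) : Prop :=
  ∃ t, ((blocks.take t).flatten).length ≤ i ∧ j < ((blocks.take (t+1)).flatten).length

/-- w is k-synchronisable: some linearisation of msc(w) splits into blocks of
    at most k sends followed by at most k receives, with matched pairs co-located. -/
def kSynchronisable (k : ℕ) (w : List Ev) : Prop :=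
  ∃ blocks : List (List Ev),
    channelCompliant blocks.flatten ∧ sameMSC w blocks.flatten ∧
    (∀ b ∈ blocks, ∃ s r, b = s ++ r ∧ s.length ≤ k ∧ r.length ≤ k ∧
      (∀ e ∈ s, isSnd e) ∧ (∀ e ∈ r, isRcv e)) ∧
    (∀ P Q i j, Matches blocks.flatten P Q i j → SameBlock blocks i j)

/-- One step of the indistinguishability relation ∼. -/
inductive Sim1 : List Ev → List Ev → Prop
  | ss (u v : List Ev) (P Q R S m m' : ℕ) (h : P ≠ R) :
      Sim1 (u ++ Ev.snd P Q m :: Ev.snd R S m' :: v)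
           (u ++ Ev.snd R S m' :: Ev.snd P Q m :: v)
  | rr (u v : List Ev) (P Q R S m m' : ℕ) (h : Q ≠ S) :
      Sim1 (u ++ Ev.rcv P Q m :: Ev.rcv R S m' :: v)
           (u ++ Ev.rcv R S m' :: Ev.rcv P Q m :: v)
  | sr (u v : List Ev) (P Q R S m m' : ℕ) (h1 : P ≠ S) (h2 : P ≠ R ∨ Q ≠ S) :
      Sim1 (u ++ Ev.snd P Q m :: Ev.rcv R S m' :: v)
           (u ++ Ev.rcv R S m' :: Ev.snd P Q m :: v)
  | srSame (u v : List Ev) (P Q m m' : ℕ)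
      (h : (recvs u P Q).length < (sends u P Q).length) :
      Sim1 (u ++ Ev.snd P Q m :: Ev.rcv P Q m' :: v)
           (u ++ Ev.rcv P Q m' :: Ev.snd P Q m :: v)

/-- The indistinguishability relation ∼ (finitely many swaps). -/
def Sim : List Ev → List Ev → Prop := Relation.ReflTransGen Sim1

/-! Along a concatenation of complete words every channel is empty at each junction, so at any
point of the concatenation the contents of a channel are those built up inside the current factor;
compliance and the bound of that factor therefore carry over to the whole word. -/

theorem List.prefix_or_exists_of_prefix_append {α : Type*} {u w r : List α}
    (h : u <+: w ++ r) : u <+: w ∨ ∃ u', u = w ++ u' ∧ u' <+: r := by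
  rcases List.prefix_or_prefix_of_prefix h (List.prefix_append w r) with hw | ⟨u', rfl⟩
  · exact Or.inl hw
  · exact Or.inr ⟨u', rfl, (List.prefix_append_right_inj w).mp h⟩

@[simp]
lemma sends_append (a b : List Ev) (P Q : ℕ) :
    sends (a ++ b) P Q = sends a P Q ++ sends b P Q := by
  simp [sends]

@[simp]
lemma recvs_append (a b : List Ev) (P Q : ℕ) :
    recvs (a ++ b) P Q = recvs a P Q ++ recvs b P Q := by
  simp [recvs]

lemma channelCompliant_nil : channelCompliant [] := by
  intro u hu P Q
  rw [List.prefix_nil.mp hu]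
  exact List.prefix_rfl

lemma complete_nil : complete [] := fun _ _ => rfl

lemma bounded_nil (B : ℕ) : bounded B [] := by
  intro u hu P Q
  rw [List.prefix_nil.mp hu]
  exact Nat.zero_le _

lemma bounded.mono {B C : ℕ} {w : List Ev} (hw : bounded B w) (hBC : B ≤ C) : bounded C w :=
  fun u hu P Q => (hw u hu P Q).trans (by omega)

lemma complete.append {w r : List Ev} (hw : complete w) (hr : complete r) :
    complete (w ++ r) := by
  intro P Q
  rw [sends_append, recvs_append, hw P Q, hr P Q]

lemma channelCompliant.append {w r : List Ev} (hw : channelCompliant w) (hwc : complete w)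
    (hr : channelCompliant r) : channelCompliant (w ++ r) := by
  intro u hu P Q
  rcases List.prefix_or_exists_of_prefix_append hu with hu | ⟨u', rfl, hu'⟩
  · exact hw u hu P Q
  · rw [sends_append, recvs_append, hwc P Q]
    exact (List.prefix_append_right_inj _).mpr (hr u' hu' P Q)

lemma bounded.append {B : ℕ} {w r : List Ev} (hw : bounded B w) (hwc : complete w)
    (hr : bounded B r) : bounded B (w ++ r) := by
  intro u hu P Q
  rcases List.prefix_or_exists_of_prefix_append hu with hu | ⟨u', rfl, hu'⟩
  · exact hw u hu P Q
  · have := hr u' hu' P Q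
    rw [sends_append, recvs_append, List.length_append, List.length_append, hwc P Q]
    omega

lemma complete_flatten {ws : List (List Ev)} (h : ∀ w ∈ ws, complete w) :
    complete ws.flatten := by
  induction ws with
  | nil => exact complete_nil
  | cons w ws ih =>
    simp only [List.forall_mem_cons] at h
    exact h.1.append (ih h.2)

lemma channelCompliant_flatten {ws : List (List Ev)}
    (h : ∀ w ∈ ws, channelCompliant w ∧ complete w) : channelCompliant ws.flatten := by
  induction ws with
  | nil => exact channelCompliant_nil
  | cons w ws ih =>
    simp only [List.forall_mem_cons] at h
    exact h.1.1.append h.1.2 (ih h.2)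

lemma bounded_flatten {B : ℕ} {ws : List (List Ev)}
    (h : ∀ w ∈ ws, complete w ∧ bounded B w) : bounded B ws.flatten := by
  induction ws with
  | nil => exact bounded_nil B
  | cons w ws ih =>
    simp only [List.forall_mem_cons] at h
    exact h.1.2.append h.1.1 (ih h.2)

/-- concatenating complete channel-compliant words, each
    Bᵢ-bounded, yields a channel-compliant word bounded by max Bᵢ; hence
    every word with the same MSC is existentially (max Bᵢ)-bounded. -/
theorem concat_bounded_linearisations (ws : List (List Ev)) (Bf : List Ev → ℕ)
    (h : ∀ w ∈ ws, channelCompliant w ∧ complete w ∧ bounded (Bf w) w) :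
    channelCompliant ws.flatten ∧
    bounded ((ws.map Bf).foldr max 0) ws.flatten ∧
    complete ws.flatten ∧
    (∀ v, sameMSC v ws.flatten → existBounded ((ws.map Bf).foldr max 0) v) := by
  have hcc : channelCompliant ws.flatten :=
    channelCompliant_flatten fun w hw => ⟨(h w hw).1, (h w hw).2.1⟩
  have hb : bounded ((ws.map Bf).foldr max 0) ws.flatten :=
    bounded_flatten fun w hw =>
      ⟨(h w hw).2.1, (h w hw).2.2.mono (List.le_max_of_le' 0 (List.mem_map_of_mem hw) le_rfl)⟩
  exact ⟨hcc, hb, complete_flatten fun w hw => (h w hw).2.1,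
    fun v hv => ⟨ws.flatten, hcc, hv, hb⟩⟩
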